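/- arXiv:1304.0060 — 2 statements merged into one kernel-verified Lean document; each statement's English description precedes it below -/
import Mathlib

section
/- If X is an invariant subspace of a trace-preserving completely positive map E (i.e., E(X) ⊆ X where E(X) is the span of supports of E(ψ) for ψ ∈ X), then for every density operator ρ, tr(P_X E(ρ)) ≥ tr(P_X ρ), where P_X is the orthogonal projection onto X. -/
open Matrix Filter Topology
open scoped ComplexOrder

/-- The matrix of the orthogonal projection onto a subspace `X`. -/
noncomputable def projMat {d : ℕ} (X : Submodule ℂ (EuclideanSpace ℂ (Fin d))) :
    Matrix (Fin d) (Fin d) ℂ :=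
  Matrix.toEuclideanLin.symm ((X.subtypeL.comp (X.orthogonalProjectionOnto)).toLinearMap)

/-- The support of an operator: the range of the associated linear map. -/
noncomputable def matSupp {d : ℕ} (A : Matrix (Fin d) (Fin d) ℂ) :
    Submodule ℂ (EuclideanSpace ℂ (Fin d)) :=
  LinearMap.range (Matrix.toEuclideanLin A)

/-- The outer product `|v⟩⟨v|`. -/
noncomputable def outer {d : ℕ} (v : EuclideanSpace ℂ (Fin d)) : Matrix (Fin d) (Fin d) ℂ :=
  fun i j => v i * star (v j)

/-- The completely positive map `A ↦ ∑ i, E i * A * (E i)†` given by Kraus operators `E`. -/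
noncomputable def krausMap {d m : ℕ} (E : Fin m → Matrix (Fin d) (Fin d) ℂ)
    (A : Matrix (Fin d) (Fin d) ℂ) : Matrix (Fin d) (Fin d) ℂ :=
  ∑ i, E i * A * (E i)ᴴ

/-!
Each vector `E i ψ` lies in the support of `E(|ψ⟩⟨ψ|) = ∑ j |E j ψ⟩⟨E j ψ|`, so invariance of the
supports says that every Kraus operator maps `X` into `X`, i.e. `P E i P = E i P` for `P = P_X`.
Taking adjoints, `P (E i)† P = P (E i)†`, so the Heisenberg-picture image `B = ∑ i (E i)† P E i`
satisfies `P B = ∑ i P (E i)† E i = P` and `B P = P`. Hence `B - P = (1 - P) B (1 - P) ≥ 0`, and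
`tr (P E(ρ)) = tr (B ρ) ≥ tr (P ρ)` because the trace of a product of positive matrices is
non-negative.
-/

open InnerProductSpace

section StarOrderedRing

variable {R ι : Type*} [Ring R] [StarRing R] [PartialOrder R] [StarOrderedRing R] [Fintype ι]

theorem IsStarProjection.le_sum_star_mul_mul {p : R} (hp : IsStarProjection p) {e : ι → R}
    (he : ∑ i, star (e i) * e i = 1) (hinv : ∀ i, p * e i * p = e i * p) :
    p ≤ ∑ i, star (e i) * p * e i := by
  set b := ∑ i, star (e i) * p * e i
  have hpp : p * p = p := hp.isIdempotentElem
  have hps : star p = p := hp.isSelfAdjoint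
  have hpb : p * b = p := by
    have key (i : ι) : p * star (e i) * p = p * star (e i) := by
      simpa only [star_mul, hps, mul_assoc] using congrArg star (hinv i)
    calc p * b = ∑ i, p * star (e i) * p * e i := by simp only [b, Finset.mul_sum, mul_assoc]
      _ = p * ∑ i, star (e i) * e i := by simp only [key, Finset.mul_sum, mul_assoc]
      _ = p := by rw [he, mul_one]
  have hb : IsSelfAdjoint b := by
    simp only [b, IsSelfAdjoint, star_sum, star_mul, star_star, hps, mul_assoc]
  have hbp : b * p = p := by
    simpa only [star_mul, hb.star_eq, hps] using congrArg star hpb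
  have hb_nonneg : 0 ≤ b :=
    Finset.sum_nonneg fun i _ => star_left_conjugate_nonneg hp.nonneg (e i)
  have hcompress : b - p = star (1 - p) * b * (1 - p) := by
    calc b - p = b - p * b - b * p + p * b * p := by rw [hpb, hbp, hpp]; abel
      _ = star (1 - p) * b * (1 - p) := by rw [star_sub, star_one, hps]; noncomm_ring
  rw [← sub_nonneg, hcompress]
  exact star_left_conjugate_nonneg hb_nonneg _

end StarOrderedRing

theorem mem_range_sum_rankOne_self {𝕜 F ι : Type*} [RCLike 𝕜] [NormedAddCommGroup F]
    [InnerProductSpace 𝕜 F] [FiniteDimensional 𝕜 F] [Fintype ι] (w : ι → F) (i : ι) :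
    w i ∈ LinearMap.range (∑ j, (rankOne 𝕜 (w j) (w j) : F →ₗ[𝕜] F)) := by
  set T : F →ₗ[𝕜] F := ∑ j, (rankOne 𝕜 (w j) (w j) : F →ₗ[𝕜] F)
  rw [← Submodule.orthogonal_orthogonal (LinearMap.range T), Submodule.mem_orthogonal]
  intro u hu
  have hTu : inner 𝕜 (T u) u = ∑ j, ((‖inner 𝕜 (w j) u‖ ^ 2 : ℝ) : 𝕜) := by
    simp only [T, LinearMap.sum_apply, ContinuousLinearMap.coe_coe, rankOne_apply, sum_inner,
      inner_smul_left, RCLike.ofReal_pow]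
    exact Finset.sum_congr rfl fun j _ => RCLike.conj_mul _
  have hsum : ∑ j, ‖inner 𝕜 (w j) u‖ ^ 2 = 0 := by
    exact_mod_cast hTu.symm.trans (hu _ ⟨u, rfl⟩)
  have hi := (Finset.sum_eq_zero_iff_of_nonneg fun j _ => sq_nonneg ‖inner 𝕜 (w j) u‖).mp hsum i
    (Finset.mem_univ i)
  rw [← inner_conj_symm, norm_eq_zero.mp (pow_eq_zero_iff two_ne_zero |>.mp hi), map_zero]

section MatrixOrder

open scoped MatrixOrder

variable {n 𝕜 : Type*} [Fintype n] [RCLike 𝕜]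

theorem Matrix.trace_mul_nonneg {A B : Matrix n n 𝕜} (hA : 0 ≤ A) (hB : 0 ≤ B) :
    0 ≤ (A * B).trace := by
  classical
  obtain ⟨s, hs, rfl⟩ : ∃ s, IsSelfAdjoint s ∧ s * s = B :=
    ⟨CFC.sqrt B, (CFC.sqrt_nonneg B).isSelfAdjoint, CFC.sqrt_mul_sqrt_self B hB⟩
  rw [← mul_assoc, trace_mul_cycle]
  simpa only [hs.star_eq] using (star_left_conjugate_nonneg hA s).posSemidef.trace_nonneg

theorem Matrix.trace_mul_le_trace_mul_of_le {A B C : Matrix n n 𝕜} (hAB : A ≤ B) (hC : 0 ≤ C) :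
    (A * C).trace ≤ (B * C).trace := by
  have := Matrix.trace_mul_nonneg (sub_nonneg.mpr hAB) hC
  rwa [sub_mul, trace_sub, sub_nonneg] at this

end MatrixOrder

section KrausMap

variable {d m : ℕ}

local notation "toCLM" => Matrix.toEuclideanCLM (n := Fin _) (𝕜 := ℂ)

theorem toEuclideanLin_outer (ψ : EuclideanSpace ℂ (Fin d)) :
    toEuclideanLin (outer ψ) = rankOne ℂ ψ ψ :=
  toEuclideanLin.eq_symm_apply.mp (symm_toEuclideanLin_rankOne ψ ψ).symm

theorem toEuclideanLin_mul_outer_mul (A : Matrix (Fin d) (Fin d) ℂ) (ψ : EuclideanSpace ℂ (Fin d)) :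
    toEuclideanLin (A * outer ψ * Aᴴ) = rankOne ℂ (toEuclideanLin A ψ) (toEuclideanLin A ψ) := by
  ext1 v
  simp [toEuclideanLin_conjTranspose_eq_adjoint, toEuclideanLin_outer,
    LinearMap.adjoint_inner_right]

theorem apply_mem_matSupp_krausMap_outer (E : Fin m → Matrix (Fin d) (Fin d) ℂ)
    (ψ : EuclideanSpace ℂ (Fin d)) (i : Fin m) :
    toEuclideanLin (E i) ψ ∈ matSupp (krausMap E (outer ψ)) := by
  rw [matSupp, krausMap, map_sum]
  simp only [toEuclideanLin_mul_outer_mul]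
  exact mem_range_sum_rankOne_self (fun j => toEuclideanLin (E j) ψ) i

theorem toEuclideanCLM_projMat (X : Submodule ℂ (EuclideanSpace ℂ (Fin d))) :
    toCLM (projMat X) = X.starProjection :=
  ContinuousLinearMap.coe_injective <| by
    rw [coe_toEuclideanCLM_eq_toEuclideanLin]
    exact toEuclideanLin.apply_symm_apply _

theorem isStarProjection_projMat (X : Submodule ℂ (EuclideanSpace ℂ (Fin d))) :
    IsStarProjection (projMat X) := by
  have h := isStarProjection_starProjection (U := X)
  rw [← toEuclideanCLM_projMat] at h
  exact ⟨EquivLike.injective toCLM (by rw [map_mul]; exact h.isIdempotentElem),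
    EquivLike.injective toCLM (by rw [map_star]; exact h.isSelfAdjoint)⟩

theorem projMat_mul_mul_projMat {X : Submodule ℂ (EuclideanSpace ℂ (Fin d))}
    {A : Matrix (Fin d) (Fin d) ℂ} (hA : ∀ v ∈ X, toEuclideanLin A v ∈ X) :
    projMat X * A * projMat X = A * projMat X := by
  apply EquivLike.injective toCLM
  rw [map_mul, map_mul, map_mul, toEuclideanCLM_projMat]
  have hX : X.starProjection.range ∈ Module.End.invtSubmodule (toCLM A : _ →ₗ[ℂ] _) := by
    rw [Submodule.range_starProjection, Module.End.mem_invtSubmodule]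
    exact hA
  exact ContinuousLinearMap.IsIdempotentElem.conj_eq_of_range_mem_invtSubmodule
    (isStarProjection_starProjection (U := X)).isIdempotentElem hX

theorem trace_mul_krausMap (E : Fin m → Matrix (Fin d) (Fin d) ℂ)
    (A ρ : Matrix (Fin d) (Fin d) ℂ) :
    (A * krausMap E ρ).trace = (krausMap (fun i => (E i)ᴴ) A * ρ).trace := by
  simp only [krausMap, conjTranspose_conjTranspose, Finset.mul_sum, Finset.sum_mul, trace_sum]
  refine Finset.sum_congr rfl fun i _ => ?_
  rw [← mul_assoc, ← mul_assoc, trace_mul_comm, ← mul_assoc, ← mul_assoc]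

end KrausMap

open scoped MatrixOrder in
theorem stmt0_general {d m : ℕ} (E : Fin m → Matrix (Fin d) (Fin d) ℂ)
    (hE : ∑ i, (E i)ᴴ * E i = 1)
    (X : Submodule ℂ (EuclideanSpace ℂ (Fin d)))
    (hinv : ∀ ψ : EuclideanSpace ℂ (Fin d), ψ ∈ X → matSupp (krausMap E (outer ψ)) ≤ X)
    (ρ : Matrix (Fin d) (Fin d) ℂ) (hρ : ρ.PosSemidef) :
    ((projMat X * ρ).trace).re ≤ ((projMat X * krausMap E ρ).trace).re := by
  have hEX (i : Fin m) : ∀ v ∈ X, toEuclideanLin (E i) v ∈ X := fun v hv =>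
    hinv v hv (apply_mem_matSupp_krausMap_outer E v i)
  have hP : projMat X ≤ krausMap (fun i => (E i)ᴴ) (projMat X) := by
    simpa only [krausMap, conjTranspose_conjTranspose, star_eq_conjTranspose] using
      (isStarProjection_projMat X).le_sum_star_mul_mul hE fun i => projMat_mul_mul_projMat (hEX i)
  rw [trace_mul_krausMap]
  exact (Complex.le_def.mp (Matrix.trace_mul_le_trace_mul_of_le hP hρ.nonneg)).1

/-- If `X` is invariant under the trace-preserving CP map `E`, then the probability of
lying in `X` is non-decreasing under `E`. -/
theorem stmt0 {d m : ℕ} (E : Fin m → Matrix (Fin d) (Fin d) ℂ)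
    (hE : ∑ i, (E i)ᴴ * E i = 1)
    (X : Submodule ℂ (EuclideanSpace ℂ (Fin d)))
    (hinv : ∀ ψ : EuclideanSpace ℂ (Fin d), ψ ∈ X → matSupp (krausMap E (outer ψ)) ≤ X)
    (ρ : Matrix (Fin d) (Fin d) ℂ) (hρ : ρ.PosSemidef) (hρtr : ρ.trace = 1) :
    ((projMat X * ρ).trace).re ≤ ((projMat X * krausMap E ρ).trace).re :=
  stmt0_general E hE X hinv ρ hρ
end

section
/- A subspace X is a BSCC of a quantum Markov chain (H, E) if and only if there exists a minimal fixed point state ρ of E with supp(ρ) = X. Moreover, such ρ is the unique fixed point state (up to normalisation) whose support is contained in X. -/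
/-!
Supports of positive matrices behave like the Loewner order: `0 ≤ A ≤ B` forces
`supp A ≤ supp B`, and conversely `supp A ≤ supp B` gives `A ≤ c B` for some `c > 0`
(compare the two quadratic forms on the compact unit sphere of `supp B`). Hence the Kraus map
is monotone on supports, so the support of a fixed state is invariant and contains the
reachable space of each of its vectors. Cesàro averages of the orbit of a state have a cluster
point, which is a fixed state supported in the span of the orbit.

In a BSCC `X` this produces a fixed state, and every fixed state supported in `X` has support
exactly `X`. Two such states `ρ, σ` are proportional: for the largest `c` with `σ - c ρ ≥ 0`,
the fixed state `σ - c ρ`, if nonzero, would again have support `X` and so dominate a multiple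
of `ρ`. Conversely, the support of a minimal fixed state `ρ` is invariant, and the reachable
space of any of its vectors carries a fixed state, which by minimality is a multiple of `ρ`.
-/

open Matrix Filter Topology
open scoped ComplexOrder

/-- The reachable space of a state `ρ`: the join of the supports of all iterates. -/
noncomputable def Reach {d m : ℕ} (E : Fin m → Matrix (Fin d) (Fin d) ℂ)
    (ρ : Matrix (Fin d) (Fin d) ℂ) : Submodule ℂ (EuclideanSpace ℂ (Fin d)) :=
  ⨆ n : ℕ, matSupp ((krausMap E)^[n] ρ)

/-- A BSCC: a nonzero invariant subspace `B` such that the reachable space of every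
nonzero vector of `B` is exactly `B`. -/
noncomputable def IsBSCC {d m : ℕ} (E : Fin m → Matrix (Fin d) (Fin d) ℂ)
    (B : Submodule ℂ (EuclideanSpace ℂ (Fin d))) : Prop :=
  B ≠ ⊥ ∧
  (∀ ρ : Matrix (Fin d) (Fin d) ℂ, ρ.PosSemidef → matSupp ρ ≤ B →
      matSupp (krausMap E ρ) ≤ B) ∧
  (∀ v : EuclideanSpace ℂ (Fin d), v ∈ B → v ≠ 0 → Reach E (outer v) = B)

/-- A fixed point state: a nonzero positive semidefinite operator with `E(ρ) = ρ`. -/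
noncomputable def FixedState {d m : ℕ} (E : Fin m → Matrix (Fin d) (Fin d) ℂ)
    (ρ : Matrix (Fin d) (Fin d) ℂ) : Prop :=
  ρ.PosSemidef ∧ ρ ≠ 0 ∧ krausMap E ρ = ρ

open scoped InnerProductSpace

theorem exists_fixedPoint_of_isCompact_of_convex {V : Type*} [NormedAddCommGroup V]
    [NormedSpace ℝ V] (T : V →L[ℝ] V) {S : Set V} (hSc : IsCompact S) (hSconv : Convex ℝ S)
    {x : V} (hx : ∀ n, T^[n] x ∈ S) : ∃ y ∈ S, T y = y := by
  obtain ⟨R, hR⟩ := hSc.isBounded.exists_norm_le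
  set avg : ℕ → V := fun N => ∑ n ∈ Finset.range (N + 1), ((N : ℝ) + 1)⁻¹ • T^[n] x
  have havg : ∀ N, avg N ∈ S := fun N =>
    hSconv.sum_mem (fun _ _ => by positivity) (by simp [field]) (fun n _ => hx n)
  have hstep : ∀ N, T (avg N) - avg N = ((N : ℝ) + 1)⁻¹ • (T^[N + 1] x - x) := by
    intro N
    simp only [avg, map_sum, map_smul, ← Finset.sum_sub_distrib, ← smul_sub,
      ← Function.iterate_succ_apply' T, ← Finset.smul_sum, Finset.sum_range_sub (T^[·] x),
      Function.iterate_zero_apply]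
  have hsmall : Tendsto (fun N => T (avg N) - avg N) atTop (𝓝 0) := by
    refine squeeze_zero_norm (a := fun N : ℕ => 1 / ((N : ℝ) + 1) * (2 * R)) (fun N => ?_) ?_
    · rw [hstep, norm_smul, Real.norm_of_nonneg (by positivity), one_div]
      gcongr
      exact (norm_sub_le _ _).trans (by linarith [hR _ (hx (N + 1)), hR x (hx 0)])
    · simpa using tendsto_one_div_add_atTop_nhds_zero_nat.mul_const (2 * R)
  obtain ⟨y, hyS, φ, hφ, hlim⟩ := hSc.tendsto_subseq havg
  refine ⟨y, hyS, sub_eq_zero.1 (tendsto_nhds_unique ?_ (hsmall.comp hφ.tendsto_atTop))⟩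
  exact ((T.continuous.tendsto y).comp hlim).sub hlim

theorem exists_le_mul_of_homogeneous {V : Type*} [NormedAddCommGroup V] [NormedSpace ℂ V]
    [FiniteDimensional ℂ V] {K : Submodule ℂ V} {f g : V → ℝ} (hf : Continuous f)
    (hg : Continuous g) (hf_smul : ∀ (c : ℂ) x, f (c • x) = ‖c‖ ^ 2 * f x)
    (hg_smul : ∀ (c : ℂ) x, g (c • x) = ‖c‖ ^ 2 * g x)
    (hpos : ∀ x ∈ K, x ≠ 0 → 0 < f x) :
    ∃ c : ℝ, 0 < c ∧ ∀ x ∈ K, g x ≤ c * f x := by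
  have hC : IsCompact (Metric.sphere (0 : V) 1 ∩ K) :=
    (isCompact_sphere 0 1).inter_right K.closed_of_finiteDimensional
  obtain ⟨ε, hε, hεf⟩ := hC.exists_forall_le' hf.continuousOn fun u hu =>
    hpos u hu.2 (ne_zero_of_mem_unit_sphere ⟨u, hu.1⟩)
  obtain ⟨M, hM⟩ := hC.bddAbove_image hg.continuousOn
  refine ⟨(|M| + 1) / ε, by positivity, fun x hx => ?_⟩
  rcases eq_or_ne x 0 with rfl | hx0
  · have hf0 := hf_smul 0 0
    have hg0 := hg_smul 0 0
    simp only [smul_zero, norm_zero, ne_eq, OfNat.ofNat_ne_zero, not_false_eq_true, zero_pow,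
      zero_mul] at hf0 hg0
    simp [hf0, hg0]
  set u : V := ((‖x‖⁻¹ : ℝ) : ℂ) • x
  have hu : u ∈ Metric.sphere (0 : V) 1 ∩ K :=
    ⟨by simp [u, norm_smul, hx0], K.smul_mem _ hx⟩
  have hxu : x = ((‖x‖ : ℝ) : ℂ) • u := by
    simp [u, smul_smul, hx0]
  have hgu : g u ≤ (|M| + 1) / ε * f u := calc
    g u ≤ |M| + 1 := (hM ⟨u, hu, rfl⟩).trans (by linarith [le_abs_self M])
    _ = (|M| + 1) / ε * ε := by field_simp
    _ ≤ (|M| + 1) / ε * f u := by gcongr; exact hεf u hu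
  rw [hxu, hf_smul, hg_smul]
  nlinarith [sq_nonneg ‖((‖x‖ : ℝ) : ℂ)‖]

section Support

variable {d : ℕ} {A B : Matrix (Fin d) (Fin d) ℂ}

theorem matSupp_eq_bot_iff : matSupp A = ⊥ ↔ A = 0 := by
  rw [matSupp, LinearMap.range_eq_bot, map_eq_zero_iff _ Matrix.toEuclideanLin.injective]

theorem matSupp_smul {c : ℂ} (hc : c ≠ 0) (A : Matrix (Fin d) (Fin d) ℂ) :
    matSupp (c • A) = matSupp A := by
  rw [matSupp, map_smul, LinearMap.range_smul _ _ hc, matSupp]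

theorem matSupp_le_iff {Y : Submodule ℂ (EuclideanSpace ℂ (Fin d))} :
    matSupp A ≤ Y ↔ ∀ x, toEuclideanLin A x ∈ Y :=
  ⟨fun h x => h ⟨x, rfl⟩, by rintro h _ ⟨x, rfl⟩; exact h x⟩

theorem Matrix.IsHermitian.orthogonal_matSupp (hA : A.IsHermitian) :
    (matSupp A)ᗮ = LinearMap.ker (toEuclideanLin A) :=
  (isSymmetric_toEuclideanLin_iff.2 hA).orthogonal_range

theorem Matrix.IsHermitian.matSupp_le_matSupp_iff_ker_le (hA : A.IsHermitian)
    (hB : B.IsHermitian) :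
    matSupp A ≤ matSupp B ↔
      LinearMap.ker (toEuclideanLin B) ≤ LinearMap.ker (toEuclideanLin A) := by
  rw [← Submodule.orthogonal_le_orthogonal_iff, hA.orthogonal_matSupp, hB.orthogonal_matSupp]

theorem Matrix.PosSemidef.toEuclideanLin_eq_zero_iff (hA : A.PosSemidef)
    (x : EuclideanSpace ℂ (Fin d)) :
    toEuclideanLin A x = 0 ↔ (⟪x, toEuclideanLin A x⟫_ℂ).re = 0 := by
  refine ⟨fun h => by simp [h], fun h => ?_⟩
  have hnonneg := (isPositive_toEuclideanLin_iff.2 hA).inner_nonneg_right x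
  have hzero : ⟪x, toEuclideanLin A x⟫_ℂ = 0 :=
    Complex.ext h (Complex.nonneg_iff.1 hnonneg).2.symm
  rw [EuclideanSpace.inner_eq_star_dotProduct, toLpLin_apply, dotProduct_comm,
    hA.dotProduct_mulVec_zero_iff] at hzero
  simp [toLpLin_apply, hzero]

theorem Matrix.PosSemidef.matSupp_le_of_sub (hA : A.PosSemidef) (hBA : (B - A).PosSemidef) :
    matSupp A ≤ matSupp B := by
  have hB : B.PosSemidef := by simpa using hBA.add hA
  rw [hA.1.matSupp_le_matSupp_iff_ker_le hB.1]
  intro x hx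
  rw [LinearMap.mem_ker, hA.toEuclideanLin_eq_zero_iff]
  have h₁ := (isPositive_toEuclideanLin_iff.2 hBA).re_inner_nonneg_right x
  have h₂ := (isPositive_toEuclideanLin_iff.2 hA).re_inner_nonneg_right x
  simp only [map_sub, LinearMap.sub_apply, LinearMap.mem_ker.1 hx, zero_sub, inner_neg_right,
    Complex.neg_re, RCLike.re_to_complex] at h₁ h₂
  linarith

end Support

section Domination

variable {d : ℕ} {A B : Matrix (Fin d) (Fin d) ℂ}

theorem Matrix.PosSemidef.exists_smul_sub_posSemidef (hA : A.PosSemidef) (hB : B.PosSemidef)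
    (h : matSupp A ≤ matSupp B) : ∃ c : ℝ, 0 < c ∧ ((c : ℂ) • B - A).PosSemidef := by
  set q : Matrix (Fin d) (Fin d) ℂ → EuclideanSpace ℂ (Fin d) → ℝ :=
    fun M x => (⟪x, toEuclideanLin M x⟫_ℂ).re
  have hq_cont (M) : Continuous (q M) := Complex.continuous_re.comp
    (continuous_id.inner (LinearMap.continuous_of_finiteDimensional _))
  have hq_smul (M) (c : ℂ) (x) : q M (c • x) = ‖c‖ ^ 2 * q M x := by
    simp only [q, map_smul, inner_smul_left, inner_smul_right, ← mul_assoc,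
      Complex.mul_conj', ← Complex.ofReal_pow, Complex.re_ofReal_mul]
  have hq_pos : ∀ x ∈ matSupp B, x ≠ 0 → 0 < q B x := by
    intro x hxB hx0
    refine ((isPositive_toEuclideanLin_iff.2 hB).re_inner_nonneg_right x).lt_of_ne' fun hq => ?_
    have hx : x ∈ (matSupp B)ᗮ := by
      rw [hB.1.orthogonal_matSupp]; exact (hB.toEuclideanLin_eq_zero_iff x).2 hq
    exact hx0 (inner_self_eq_zero.1 (Submodule.inner_right_of_mem_orthogonal hxB hx))
  obtain ⟨c, hc, hqAB⟩ := exists_le_mul_of_homogeneous (hq_cont B) (hq_cont A)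
    (hq_smul B) (hq_smul A) hq_pos
  refine ⟨c, hc, ?_⟩
  have hcB : ((c : ℂ) • B).PosSemidef := hB.smul (by exact_mod_cast hc.le)
  have hT := isSymmetric_toEuclideanLin_iff.2 (hcB.1.sub hA.1)
  rw [← isPositive_toEuclideanLin_iff]
  refine ⟨hT, fun x => ?_⟩
  obtain ⟨y, hy, z, hz, rfl⟩ := (matSupp B).exists_add_mem_mem_orthogonal x
  have hBz : toEuclideanLin B z = 0 := by rwa [hB.1.orthogonal_matSupp] at hz
  have hAz : toEuclideanLin A z = 0 := by
    rw [← LinearMap.mem_ker, ← hA.1.orthogonal_matSupp]; exact Submodule.orthogonal_le h hz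
  have hTz : toEuclideanLin ((c : ℂ) • B - A) z = 0 := by
    simp only [map_sub, map_smul, LinearMap.sub_apply, LinearMap.smul_apply, hBz, hAz,
      smul_zero, sub_zero]
  calc (0 : ℝ) ≤ c * q B y - q A y := by linarith [hqAB y hy]
    _ = (⟪toEuclideanLin ((c : ℂ) • B - A) (y + z), y + z⟫_ℂ).re := by
      rw [map_add, hTz, add_zero, inner_add_right, hT y z, hTz, inner_zero_right, add_zero,
        ← inner_conj_symm, Complex.conj_re]
      simp only [q, map_sub, map_smul, LinearMap.sub_apply, LinearMap.smul_apply,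
        inner_sub_right, inner_smul_right, Complex.sub_re, Complex.re_ofReal_mul]

end Domination

section Outer

variable {d : ℕ} {v : EuclideanSpace ℂ (Fin d)}

theorem outer_posSemidef (v : EuclideanSpace ℂ (Fin d)) : (outer v).PosSemidef :=
  posSemidef_vecMulVec_self_star v.ofLp

theorem outer_ne_zero (hv : v ≠ 0) : outer v ≠ 0 := by
  refine fun h => hv (WithLp.ofLp_injective 2 (funext fun i => ?_))
  simpa [outer] using congrFun (congrFun h i) i

theorem matSupp_outer_le_of_mem {Y : Submodule ℂ (EuclideanSpace ℂ (Fin d))} (hv : v ∈ Y) :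
    matSupp (outer v) ≤ Y := by
  refine matSupp_le_iff.2 fun x => ?_
  have hx : toEuclideanLin (outer v) x = (star v.ofLp ⬝ᵥ x.ofLp) • v := by
    ext i
    simp [toLpLin_apply, outer, mulVec, dotProduct, Finset.mul_sum, mul_comm, mul_left_comm]
  exact hx ▸ Y.smul_mem _ hv

end Outer

section Topology

variable {n : Type*} [Fintype n] {d : ℕ}

theorem isClosed_setOf_posSemidef : IsClosed {A : Matrix n n ℂ | A.PosSemidef} := by
  simp only [posSemidef_iff_dotProduct_mulVec, Set.ofPred_and, Set.ofPred_forall]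
  exact (isClosed_eq continuous_id.matrix_conjTranspose continuous_id).inter <|
    isClosed_iInter fun x => isClosed_le continuous_const <|
      continuous_const.dotProduct (continuous_id.matrix_mulVec continuous_const)

theorem isClosed_setOf_matSupp_le (Y : Submodule ℂ (EuclideanSpace ℂ (Fin d))) :
    IsClosed {A : Matrix (Fin d) (Fin d) ℂ | matSupp A ≤ Y} := by
  simp only [matSupp_le_iff, Set.ofPred_forall]
  exact isClosed_iInter fun x => Y.closed_of_finiteDimensional.preimage <|
    (PiLp.continuous_toLp 2 _).comp (continuous_id.matrix_mulVec continuous_const)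

theorem Matrix.PosSemidef.norm_apply_le_norm_trace {A : Matrix n n ℂ} (hA : A.PosSemidef)
    (i j : n) : ‖A i j‖ ≤ ‖A.trace‖ := by
  have hdiag (k : n) : 0 ≤ A k k ∧ A k k ≤ A.trace :=
    ⟨hA.diag_nonneg,
      Finset.single_le_sum (f := fun l => A l l) (fun l _ => hA.diag_nonneg) (Finset.mem_univ k)⟩
  have hdet := (hA.submatrix ![i, j]).det_nonneg
  simp only [det_fin_two, submatrix_apply, cons_val_zero, cons_val_one, sub_nonneg] at hdet
  have hji : A j i = star (A i j) := (hA.1.apply j i).symm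
  have hnonneg : 0 ≤ A i j * A j i := hji ▸ mul_star_self_nonneg _
  have hsq : ‖A i j‖ ^ 2 ≤ ‖A.trace‖ ^ 2 := calc
    ‖A i j‖ ^ 2 = ‖A i j * A j i‖ := by rw [norm_mul, hji, norm_star, sq]
    _ ≤ ‖A i i * A j j‖ := CStarAlgebra.norm_le_norm_of_nonneg_of_le hnonneg hdet
    _ ≤ ‖A.trace * A.trace‖ := CStarAlgebra.norm_le_norm_of_nonneg_of_le
        (mul_nonneg (hdiag i).1 (hdiag j).1)
        (mul_le_mul (hdiag i).2 (hdiag j).2 (hdiag j).1 ((hdiag i).1.trans (hdiag i).2))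
    _ = ‖A.trace‖ ^ 2 := by rw [norm_mul, sq]
  exact (pow_le_pow_iff_left₀ (norm_nonneg _) (norm_nonneg _) two_ne_zero).1 hsq

end Topology

section Kraus

variable {d m : ℕ} (E : Fin m → Matrix (Fin d) (Fin d) ℂ) {A B : Matrix (Fin d) (Fin d) ℂ}

noncomputable def krausLinearMap :
    Matrix (Fin d) (Fin d) ℂ →ₗ[ℂ] Matrix (Fin d) (Fin d) ℂ where
  toFun := krausMap E
  map_add' A B := by simp [krausMap, mul_add, add_mul, Finset.sum_add_distrib]
  map_smul' c A := by simp [krausMap, Finset.smul_sum]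

theorem krausMap_sub (A B : Matrix (Fin d) (Fin d) ℂ) :
    krausMap E (A - B) = krausMap E A - krausMap E B :=
  map_sub (krausLinearMap E) A B

theorem krausMap_smul (c : ℂ) (A : Matrix (Fin d) (Fin d) ℂ) :
    krausMap E (c • A) = c • krausMap E A :=
  map_smul (krausLinearMap E) c A

theorem posSemidef_krausMap (hA : A.PosSemidef) : (krausMap E A).PosSemidef :=
  posSemidef_sum _ fun i _ => hA.mul_mul_conjTranspose_same (E i)

theorem posSemidef_iterate_krausMap (hA : A.PosSemidef) (n : ℕ) :
    ((krausMap E)^[n] A).PosSemidef := by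
  induction n with
  | zero => exact hA
  | succ n ih => rw [Function.iterate_succ_apply']; exact posSemidef_krausMap E ih

theorem trace_krausMap (hE : ∑ i, (E i)ᴴ * E i = 1) (A : Matrix (Fin d) (Fin d) ℂ) :
    (krausMap E A).trace = A.trace := by
  simp_rw [krausMap, trace_sum, trace_mul_cycle (E _)]
  rw [← trace_sum, ← Finset.sum_mul, hE, Matrix.one_mul]

theorem trace_iterate_krausMap (hE : ∑ i, (E i)ᴴ * E i = 1) (A : Matrix (Fin d) (Fin d) ℂ)
    (n : ℕ) : ((krausMap E)^[n] A).trace = A.trace := by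
  induction n with
  | zero => rfl
  | succ n ih => rw [Function.iterate_succ_apply', trace_krausMap E hE, ih]

theorem matSupp_krausMap_le (hA : A.PosSemidef) (hB : B.PosSemidef)
    (h : matSupp A ≤ matSupp B) : matSupp (krausMap E A) ≤ matSupp (krausMap E B) := by
  obtain ⟨c, hc, hcBA⟩ := hA.exists_smul_sub_posSemidef hB h
  have hle := (posSemidef_krausMap E hA).matSupp_le_of_sub (B := krausMap E ((c : ℂ) • B))
    (by rw [← krausMap_sub]; exact posSemidef_krausMap E hcBA)
  rwa [krausMap_smul, matSupp_smul (by exact_mod_cast hc.ne')] at hle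

theorem matSupp_iterate_krausMap_le (hA : A.PosSemidef) (hB : B.PosSemidef)
    (h : matSupp A ≤ matSupp B) (n : ℕ) :
    matSupp ((krausMap E)^[n] A) ≤ matSupp ((krausMap E)^[n] B) := by
  induction n with
  | zero => exact h
  | succ n ih =>
    simp only [Function.iterate_succ_apply']
    exact matSupp_krausMap_le E (posSemidef_iterate_krausMap E hA n)
      (posSemidef_iterate_krausMap E hB n) ih

end Kraus

section FixedStates

variable {d m : ℕ} (E : Fin m → Matrix (Fin d) (Fin d) ℂ) {A : Matrix (Fin d) (Fin d) ℂ}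

attribute [local instance] Matrix.normedAddCommGroup Matrix.normedSpace

theorem exists_fixedState_matSupp_le (hE : ∑ i, (E i)ᴴ * E i = 1) (hA : A.PosSemidef)
    (hA0 : A ≠ 0) {Y : Submodule ℂ (EuclideanSpace ℂ (Fin d))}
    (hY : ∀ n, matSupp ((krausMap E)^[n] A) ≤ Y) :
    ∃ σ, FixedState E σ ∧ matSupp σ ≤ Y := by
  set S := {B : Matrix (Fin d) (Fin d) ℂ | B.PosSemidef ∧ B.trace = A.trace ∧ matSupp B ≤ Y}
  have hS_closed : IsClosed S := isClosed_setOf_posSemidef.inter <|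
    (isClosed_eq continuous_id.matrix_trace continuous_const).inter (isClosed_setOf_matSupp_le Y)
  have hS_bdd : Bornology.IsBounded S := isBounded_iff_forall_norm_le.2 ⟨‖A.trace‖,
    fun B hB => (norm_le_iff (norm_nonneg _)).2 fun i j =>
      hB.2.1 ▸ hB.1.norm_apply_le_norm_trace i j⟩
  have hS_conv : Convex ℝ S := by
    rintro B ⟨hB, hBtr, hBY⟩ C ⟨hC, hCtr, hCY⟩ a b ha hb hab
    refine ⟨(hB.smul ha).add (hC.smul hb), ?_, matSupp_le_iff.2 fun x => ?_⟩
    · simp [hBtr, hCtr, ← add_mul, ← Complex.ofReal_add, hab]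
    · simpa [← Complex.coe_smul] using Y.add_mem (Y.smul_of_tower_mem a (matSupp_le_iff.1 hBY x))
        (Y.smul_of_tower_mem b (matSupp_le_iff.1 hCY x))
  have : ProperSpace (Matrix (Fin d) (Fin d) ℂ) := FiniteDimensional.proper_rclike ℂ _
  obtain ⟨σ, ⟨hσ, hσtr, hσY⟩, hfix⟩ := exists_fixedPoint_of_isCompact_of_convex
    ((krausLinearMap E).restrictScalars ℝ).toContinuousLinearMap
    (Metric.isCompact_of_isClosed_isBounded hS_closed hS_bdd) hS_conv (x := A)
    fun n => ⟨posSemidef_iterate_krausMap E hA n, trace_iterate_krausMap E hE A n, hY n⟩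
  refine ⟨σ, ⟨hσ, fun h0 => hA0 ?_, hfix⟩, hσY⟩
  rw [← hA.trace_eq_zero_iff, ← hσtr, h0, trace_zero]

end FixedStates

section Uniqueness

variable {d m : ℕ} {E : Fin m → Matrix (Fin d) (Fin d) ℂ} {ρ σ : Matrix (Fin d) (Fin d) ℂ}

theorem Matrix.PosSemidef.exists_isGreatest_sub_smul (hσ : σ.PosSemidef) (hρ : ρ.PosSemidef)
    (hρ0 : ρ ≠ 0) : ∃ c, IsGreatest {s : ℝ | (σ - (s : ℂ) • ρ).PosSemidef} c := by
  set S := {s : ℝ | (σ - (s : ℂ) • ρ).PosSemidef}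
  have hS_closed : IsClosed S := isClosed_setOf_posSemidef.preimage <|
    continuous_const.sub (Complex.continuous_ofReal.smul continuous_const)
  have hρtr : 0 < ρ.trace := hρ.trace_nonneg.lt_of_ne' (mt hρ.trace_eq_zero_iff.1 hρ0)
  have hS_bdd : BddAbove S := ⟨(σ.trace / ρ.trace).re, fun s hs => by
    have h := hs.trace_nonneg
    rw [trace_sub, trace_smul, smul_eq_mul, sub_nonneg, ← le_div_iff₀ hρtr] at h
    exact (Complex.le_def.1 h).1⟩
  exact ⟨sSup S, hS_closed.csSup_mem ⟨0, by simpa [S] using hσ⟩ hS_bdd,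
    fun s hs => le_csSup hS_bdd hs⟩

theorem FixedState.exists_eq_smul (hρ : FixedState E ρ) (hσ : FixedState E σ)
    (h : ∀ τ, FixedState E τ → matSupp τ ≤ matSupp σ → matSupp ρ ≤ matSupp τ) :
    ∃ c : ℝ, 0 < c ∧ σ = (c : ℂ) • ρ := by
  obtain ⟨c, hδ_psd, hc_max⟩ := hσ.1.exists_isGreatest_sub_smul hρ.1 hρ.2.1
  have hc0 : 0 ≤ c := hc_max (by simpa using hσ.1)
  set δ := σ - (c : ℂ) • ρ with hδ
  by_cases hδ0 : δ = 0
  · have hσc : σ = (c : ℂ) • ρ := sub_eq_zero.1 hδ0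
    refine ⟨c, hc0.lt_of_ne ?_, hσc⟩
    rintro rfl
    exact hσ.2.1 (by simpa using hσc)
  have hδ_fixed : FixedState E δ :=
    ⟨hδ_psd, hδ0, by rw [hδ, krausMap_sub, krausMap_smul, hρ.2.2, hσ.2.2]⟩
  have hδσ : matSupp δ ≤ matSupp σ :=
    hδ_psd.matSupp_le_of_sub <| by
      simpa [hδ] using hρ.1.smul (by exact_mod_cast hc0 : (0 : ℂ) ≤ c)
  obtain ⟨e, he, hρδ⟩ := hρ.1.exists_smul_sub_posSemidef hδ_psd (h δ hδ_fixed hδσ)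
  -- `σ - (c + e⁻¹) ρ = e⁻¹ (e δ - ρ)` contradicts the maximality of `c`.
  have hmore : (σ - ((c + e⁻¹ : ℝ) : ℂ) • ρ).PosSemidef := by
    have he_inv : (0 : ℂ) ≤ ((e⁻¹ : ℝ) : ℂ) := by exact_mod_cast (inv_nonneg.2 he.le)
    convert hρδ.smul he_inv using 1
    rw [smul_sub, smul_smul, ← Complex.ofReal_mul, inv_mul_cancel₀ he.ne', Complex.ofReal_one,
      one_smul, Complex.ofReal_add, add_smul]
    abel
  linarith [hc_max hmore, inv_pos.2 he]

end Uniqueness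

section BSCC

variable {d m : ℕ} {E : Fin m → Matrix (Fin d) (Fin d) ℂ} {τ : Matrix (Fin d) (Fin d) ℂ}
  {X : Submodule ℂ (EuclideanSpace ℂ (Fin d))}

theorem FixedState.reach_outer_le (hτ : FixedState E τ) {v : EuclideanSpace ℂ (Fin d)}
    (hv : v ∈ matSupp τ) : Reach E (outer v) ≤ matSupp τ := iSup_le fun n => by
  simpa only [Function.iterate_fixed hτ.2.2] using
    matSupp_iterate_krausMap_le E (outer_posSemidef v) hτ.1 (matSupp_outer_le_of_mem hv) n

theorem IsBSCC.matSupp_eq (hX : IsBSCC E X) (hτ : FixedState E τ) (hτX : matSupp τ ≤ X) :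
    matSupp τ = X := by
  obtain ⟨v, hv, hv0⟩ :=
    Submodule.exists_mem_ne_zero_of_ne_bot (mt matSupp_eq_bot_iff.1 hτ.2.1)
  exact hτX.antisymm (hX.2.2 v (hτX hv) hv0 ▸ hτ.reach_outer_le hv)

theorem IsBSCC.exists_fixedState (hE : ∑ i, (E i)ᴴ * E i = 1) (hX : IsBSCC E X) :
    ∃ ρ, FixedState E ρ ∧ matSupp ρ = X := by
  obtain ⟨v, hv, hv0⟩ := Submodule.exists_mem_ne_zero_of_ne_bot hX.1
  have hiter (n : ℕ) : matSupp ((krausMap E)^[n] (outer v)) ≤ X := by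
    induction n with
    | zero => exact matSupp_outer_le_of_mem hv
    | succ n ih =>
      rw [Function.iterate_succ_apply']
      exact hX.2.1 _ (posSemidef_iterate_krausMap E (outer_posSemidef v) n) ih
  obtain ⟨ρ, hρ, hρX⟩ :=
    exists_fixedState_matSupp_le E hE (outer_posSemidef v) (outer_ne_zero hv0) hiter
  exact ⟨ρ, hρ, hX.matSupp_eq hρ hρX⟩

end BSCC

/-- A subspace is a BSCC iff it is the support of a minimal fixed point state; moreover
this state is the unique fixed point state (up to normalisation) supported in it. -/
theorem stmt12 {d m : ℕ} (E : Fin m → Matrix (Fin d) (Fin d) ℂ)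
    (hE : ∑ i, (E i)ᴴ * E i = 1)
    (X : Submodule ℂ (EuclideanSpace ℂ (Fin d))) :
    IsBSCC E X ↔
    ∃ ρ : Matrix (Fin d) (Fin d) ℂ, FixedState E ρ ∧
      (∀ σ : Matrix (Fin d) (Fin d) ℂ, FixedState E σ → matSupp σ ≤ matSupp ρ → ∃ c : ℝ, 0 < c ∧ σ = (c : ℂ) • ρ) ∧
      matSupp ρ = X ∧
      (∀ σ : Matrix (Fin d) (Fin d) ℂ, FixedState E σ → matSupp σ ≤ X → ∃ c : ℝ, 0 < c ∧ σ = (c : ℂ) • ρ) := by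
  constructor
  · intro hX
    obtain ⟨ρ, hρ, rfl⟩ := hX.exists_fixedState hE
    have huniq (σ) (hσ : FixedState E σ) (hσX : matSupp σ ≤ matSupp ρ) :
        ∃ c : ℝ, 0 < c ∧ σ = (c : ℂ) • ρ :=
      hρ.exists_eq_smul hσ fun τ hτ hτσ => (hX.matSupp_eq hτ (hτσ.trans hσX)).ge
    exact ⟨ρ, hρ, huniq, rfl, huniq⟩
  · rintro ⟨ρ, hρ, hmin, rfl, -⟩
    refine ⟨mt matSupp_eq_bot_iff.1 hρ.2.1, fun A hA hAρ => ?_, fun v hv hv0 => ?_⟩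
    · simpa only [hρ.2.2] using matSupp_krausMap_le E hA hρ.1 hAρ
    · have hreach := hρ.reach_outer_le hv
      obtain ⟨σ, hσ, hσR⟩ := exists_fixedState_matSupp_le E hE (outer_posSemidef v)
        (outer_ne_zero hv0) (le_iSup (fun n => matSupp ((krausMap E)^[n] (outer v))))
      obtain ⟨c, hc, rfl⟩ := hmin σ hσ (hσR.trans hreach)
      rw [matSupp_smul (by exact_mod_cast hc.ne')] at hσR
      exact hreach.antisymm hσR
end
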